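/- arXiv:2502.14488 — 6 statements merged into one kernel-verified Lean document; each statement's English description precedes it below -/
import Mathlib

section
/- Let p be a prime, n ≥ 1, and T : Fin n → ZMod p a sequence. Call a seed r ∈ ZMod p bad if there exist positions i, j and a length m with i + m ≤ n and j + m ≤ n such that the length-m fragments of T starting at i and at j are distinct as functions but have equal fingerprints, i.e., Σ_{t<m} T(i+t)·r^{m−1−t} = Σ_{t<m} T(j+t)·r^{m−1−t}. Then the number of bad seeds r ∈ ZMod p is at most n⁴. -/
/-- **Number of bad Karp–Rabin seeds.**
For a prime `p`, `n ≥ 1` and `T : Fin n → ZMod p`, a seed `r` is *bad* if there are positions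
`i, j` and a length `m` with `i + m ≤ n` and `j + m ≤ n` such that the length-`m` fragments of
`T` starting at `i` and `j` are distinct as functions but have equal fingerprints
`Σ_{t<m} T(i+t)·r^(m-1-t) = Σ_{t<m} T(j+t)·r^(m-1-t)`. There are at most `n⁴` bad seeds. -/
theorem karp_rabin_bad_seeds_le (p n : ℕ) [Fact p.Prime] (hn : 1 ≤ n) (T : Fin n → ZMod p) :
    {r : ZMod p |
        ∃ i j m : ℕ, ∃ h1 : i + m ≤ n, ∃ h2 : j + m ≤ n,
          (fun t : Fin m => T ⟨i + t, by have := t.isLt; omega⟩) ≠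
              (fun t : Fin m => T ⟨j + t, by have := t.isLt; omega⟩) ∧
            ∑ t : Fin m, T ⟨i + t, by have := t.isLt; omega⟩ * r ^ (m - 1 - (t : ℕ)) =
              ∑ t : Fin m, T ⟨j + t, by have := t.isLt; omega⟩ * r ^ (m - 1 - (t : ℕ))}.ncard
      ≤ n ^ 4 := by
  classical
  set T' : ℕ → ZMod p := fun k => if h : k < n then T ⟨k, h⟩ else 0 with hT'
  set P : ℕ → ℕ → ℕ → Polynomial (ZMod p) := fun i j m =>
    ∑ t ∈ Finset.range m,
      Polynomial.C (T' (i + t) - T' (j + t)) * Polynomial.X ^ (m - 1 - t) with hP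
  have hdeg : ∀ i j m, m ≤ n → (P i j m).natDegree ≤ n - 1 := by
    intro i j m hm
    refine Polynomial.natDegree_sum_le_of_forall_le _ _ fun t ht => ?_
    refine le_trans (Polynomial.natDegree_C_mul_le _ _) ?_
    simp only [Polynomial.natDegree_X_pow]
    omega
  set B : Finset (ZMod p) :=
    (Finset.range n ×ˢ Finset.range n ×ˢ Finset.range (n + 1)).biUnion
      (fun x => (P x.1 x.2.1 x.2.2).roots.toFinset) with hB
  have hsub : {r : ZMod p |
        ∃ i j m : ℕ, ∃ h1 : i + m ≤ n, ∃ h2 : j + m ≤ n,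
          (fun t : Fin m => T ⟨i + t, by have := t.isLt; omega⟩) ≠
              (fun t : Fin m => T ⟨j + t, by have := t.isLt; omega⟩) ∧
            ∑ t : Fin m, T ⟨i + t, by have := t.isLt; omega⟩ * r ^ (m - 1 - (t : ℕ)) =
              ∑ t : Fin m, T ⟨j + t, by have := t.isLt; omega⟩ * r ^ (m - 1 - (t : ℕ))} ⊆ ↑B := by
    rintro r ⟨i, j, m, h1, h2, hne, heq⟩
    have hm : 1 ≤ m := by
      by_contra h
      push_neg at h
      interval_cases m
      exact hne (funext fun t => absurd t.isLt (by omega))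
    -- translate T to T'
    have hTi : ∀ t : Fin m, T ⟨i + t, by have := t.isLt; omega⟩ = T' (i + t) := by
      intro t; have := t.isLt; simp [hT', dif_pos (show i + (t : ℕ) < n by omega)]
    have hTj : ∀ t : Fin m, T ⟨j + t, by have := t.isLt; omega⟩ = T' (j + t) := by
      intro t; have := t.isLt; simp [hT', dif_pos (show j + (t : ℕ) < n by omega)]
    -- some index where they differ
    have hdiff : ∃ t0 : ℕ, t0 < m ∧ T' (i + t0) ≠ T' (j + t0) := by
      by_contra h
      push_neg at h
      refine hne (funext fun t => ?_)
      rw [hTi t, hTj t, h t t.isLt]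
    obtain ⟨t0, ht0, ht0ne⟩ := hdiff
    have hPne : P i j m ≠ 0 := by
      intro h0
      have hc : (P i j m).coeff (m - 1 - t0) = T' (i + t0) - T' (j + t0) := by
        simp only [hP, Polynomial.finset_sum_coeff, Polynomial.coeff_C_mul,
          Polynomial.coeff_X_pow]
        rw [Finset.sum_eq_single t0]
        · simp
        · intro t ht htne
          have ht' := Finset.mem_range.mp ht
          have : ¬ (m - 1 - t0 = m - 1 - t) := by omega
          simp [this]
        · intro h; exact absurd (Finset.mem_range.mpr ht0) h
      rw [h0] at hc
      simp at hc
      exact ht0ne (sub_eq_zero.mp hc.symm)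
    have heval : (P i j m).eval r = 0 := by
      simp only [hP, Polynomial.eval_finset_sum, Polynomial.eval_mul, Polynomial.eval_C,
        Polynomial.eval_pow, Polynomial.eval_X, sub_mul]
      rw [Finset.sum_sub_distrib]
      have hi' : ∑ t ∈ Finset.range m, T' (i + t) * r ^ (m - 1 - t)
          = ∑ t : Fin m, T ⟨i + t, by have := t.isLt; omega⟩ * r ^ (m - 1 - (t : ℕ)) := by
        rw [Finset.sum_range fun t => T' (i + t) * r ^ (m - 1 - t)]
        exact Finset.sum_congr rfl fun t _ => by rw [hTi t]
      have hj' : ∑ t ∈ Finset.range m, T' (j + t) * r ^ (m - 1 - t)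
          = ∑ t : Fin m, T ⟨j + t, by have := t.isLt; omega⟩ * r ^ (m - 1 - (t : ℕ)) := by
        rw [Finset.sum_range fun t => T' (j + t) * r ^ (m - 1 - t)]
        exact Finset.sum_congr rfl fun t _ => by rw [hTj t]
      rw [hi', hj', heq, sub_self]
    refine Finset.mem_coe.mpr (Finset.mem_biUnion.mpr ⟨(i, j, m), ?_, ?_⟩)
    · simp only [Finset.mem_product, Finset.mem_range]
      exact ⟨by omega, by omega, by omega⟩
    · rw [Multiset.mem_toFinset, Polynomial.mem_roots hPne]
      exact heval
  have hcard : {r : ZMod p |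
        ∃ i j m : ℕ, ∃ h1 : i + m ≤ n, ∃ h2 : j + m ≤ n,
          (fun t : Fin m => T ⟨i + t, by have := t.isLt; omega⟩) ≠
              (fun t : Fin m => T ⟨j + t, by have := t.isLt; omega⟩) ∧
            ∑ t : Fin m, T ⟨i + t, by have := t.isLt; omega⟩ * r ^ (m - 1 - (t : ℕ)) =
              ∑ t : Fin m, T ⟨j + t, by have := t.isLt; omega⟩ * r ^ (m - 1 - (t : ℕ))}.ncard
      ≤ B.card := by
    rw [← Set.ncard_coe_finset]
    exact Set.ncard_le_ncard hsub B.finite_toSet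
  refine hcard.trans ?_
  refine (Finset.card_biUnion_le).trans ?_
  refine le_trans (Finset.sum_le_card_nsmul _ _ (n - 1) ?_) ?_
  · rintro ⟨i, j, m⟩ hmem
    simp only [Finset.mem_product, Finset.mem_range] at hmem
    calc (P i j m).roots.toFinset.card ≤ (P i j m).roots.card :=
          Multiset.toFinset_card_le _
      _ ≤ (P i j m).natDegree := Polynomial.card_roots' _
      _ ≤ n - 1 := hdeg i j m (by omega)
  · obtain ⟨k, rfl⟩ : ∃ k, n = k + 1 := ⟨n - 1, by omega⟩
    simp only [Finset.card_product, Finset.card_range, smul_eq_mul, Nat.add_sub_cancel]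
    nlinarith [sq_nonneg k]
end

section
/- Let p be a prime, n ≥ 1, c ≥ 1, and T : Fin n → ZMod p a sequence, and suppose p ≥ n^{c+4}. Call a seed r ∈ ZMod p bad if there exist positions i, j and a length m with i + m ≤ n and j + m ≤ n such that the length-m fragments of T starting at i and at j are distinct but have equal fingerprints with seed r. Then n^c · (number of bad seeds) ≤ p; equivalently, a seed r drawn uniformly at random from ZMod p makes the fingerprint function perfect on all equal-length fragment comparisons of T with probability at least 1 − n^{−c}. -/
open Polynomial in
lemma kr_aux_card {K : Type*} [Field K] (m : ℕ) (f g : Fin m → K) (hfg : f ≠ g) :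
    {r : K | ∑ t : Fin m, f t * r ^ (m - 1 - (t : ℕ)) =
      ∑ t : Fin m, g t * r ^ (m - 1 - (t : ℕ))}.ncard ≤ m := by
  classical
  set q : K[X] := ∑ t : Fin m, Polynomial.C (f t - g t) * Polynomial.X ^ (m - 1 - (t : ℕ)) with hq
  obtain ⟨t0, ht0⟩ := Function.ne_iff.mp hfg
  have hm : 0 < m := t0.pos
  have hqne : q ≠ 0 := by
    intro h
    have hc : q.coeff (m - 1 - (t0 : ℕ)) = f t0 - g t0 := by
      rw [hq, Polynomial.finset_sum_coeff]
      rw [Finset.sum_eq_single t0]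
      · simp [sub_mul, Polynomial.coeff_sub, Polynomial.coeff_C_mul, Polynomial.coeff_X_pow]
      · intro t _ htne
        have h1 := t.isLt; have h2 := t0.isLt
        have : ¬ (m - 1 - (t0 : ℕ) = m - 1 - (t : ℕ)) := by
          intro h'
          apply htne
          exact Fin.ext (by omega)
        simp [sub_mul, Polynomial.coeff_sub, Polynomial.coeff_C_mul,
          Polynomial.coeff_X_pow, this]
      · simp
    rw [h] at hc
    simp at hc
    exact ht0 (sub_eq_zero.mp hc.symm)
  have hsub : {r : K | ∑ t : Fin m, f t * r ^ (m - 1 - (t : ℕ)) =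
      ∑ t : Fin m, g t * r ^ (m - 1 - (t : ℕ))} ⊆ ↑q.roots.toFinset := by
    intro r hr
    simp only [Multiset.mem_toFinset, Finset.coe_sort_coe, Finset.mem_coe,
      Polynomial.mem_roots hqne]
    rw [Polynomial.IsRoot, hq]
    simp only [Polynomial.eval_finset_sum, Polynomial.eval_mul, Polynomial.eval_C,
      Polynomial.eval_pow, Polynomial.eval_X, sub_mul, Finset.sum_sub_distrib]
    rw [sub_eq_zero]
    exact hr
  have hdeg : q.natDegree ≤ m - 1 := by
    apply Polynomial.natDegree_sum_le_of_forall_le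
    intro t _
    exact (Polynomial.natDegree_C_mul_le _ _).trans (by rw [Polynomial.natDegree_X_pow]; omega)
  calc _ ≤ (↑q.roots.toFinset : Set K).ncard :=
        Set.ncard_le_ncard hsub (q.roots.toFinset : Finset K).finite_toSet
    _ = q.roots.toFinset.card := Set.ncard_coe_finset _
    _ ≤ Multiset.card q.roots := q.roots.toFinset_card_le
    _ ≤ q.natDegree := q.card_roots'
    _ ≤ m := by omega

/-- **Choosing a large prime makes Karp–Rabin fingerprints perfect w.h.p.**
For a prime `p ≥ n^(c+4)` (with `n ≥ 1`, `c ≥ 1`) and `T : Fin n → ZMod p`, a seed `r` is *bad*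
if two distinct equal-length fragments of `T` get equal fingerprints with seed `r`.
Then `n^c · #bad ≤ p`; i.e., a uniformly random seed makes the fingerprint function perfect on
all equal-length fragment comparisons of `T` with probability at least `1 - n^(-c)`. -/
theorem karp_rabin_perfect_whp (p n c : ℕ) [Fact p.Prime] (hn : 1 ≤ n) (hc : 1 ≤ c)
    (hp : n ^ (c + 4) ≤ p) (T : Fin n → ZMod p) :
    n ^ c *
        {r : ZMod p |
          ∃ i j m : ℕ, ∃ h1 : i + m ≤ n, ∃ h2 : j + m ≤ n,
            (fun t : Fin m => T ⟨i + t, by have := t.isLt; omega⟩) ≠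
                (fun t : Fin m => T ⟨j + t, by have := t.isLt; omega⟩) ∧
              ∑ t : Fin m, T ⟨i + t, by have := t.isLt; omega⟩ * r ^ (m - 1 - (t : ℕ)) =
                ∑ t : Fin m, T ⟨j + t, by have := t.isLt; omega⟩ * r ^ (m - 1 - (t : ℕ))}.ncard
      ≤ p := by
  classical
  haveI : NeZero p := ⟨(Fact.out : p.Prime).pos.ne'⟩
  set T' : ℕ → ZMod p := fun k => if h : k < n then T ⟨k, h⟩ else 0 with hT'
  set S : ℕ → ℕ → ℕ → Set (ZMod p) := fun i j m =>
    {r : ZMod p | (fun t : Fin m => T' (i + t)) ≠ (fun t : Fin m => T' (j + t)) ∧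
      ∑ t : Fin m, T' (i + t) * r ^ (m - 1 - (t : ℕ)) =
        ∑ t : Fin m, T' (j + t) * r ^ (m - 1 - (t : ℕ))} with hS
  set F : Fin n × Fin n × Fin n → Finset (ZMod p) := fun x =>
    (Set.toFinite (S x.1 x.2.1 (x.2.2 + 1))).toFinset with hF
  have hFcard : ∀ x, (F x).card ≤ n := by
    intro x
    by_cases hne : (fun t : Fin (x.2.2 + 1 : ℕ) => T' (x.1 + t)) =
        (fun t : Fin (x.2.2 + 1 : ℕ) => T' (x.2.1 + t))
    · have : F x = ∅ := by
        rw [hF]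
        simp only [Set.Finite.toFinset_eq_empty]
        ext r
        simp [hS, hne]
      simp [this]
    · calc (F x).card = (S x.1 x.2.1 (x.2.2 + 1)).ncard :=
            (Set.ncard_eq_toFinset_card _ _).symm
        _ ≤ {r : ZMod p | ∑ t : Fin (x.2.2 + 1 : ℕ),
              T' (x.1 + t) * r ^ ((x.2.2 + 1 : ℕ) - 1 - (t : ℕ)) =
            ∑ t : Fin (x.2.2 + 1 : ℕ),
              T' (x.2.1 + t) * r ^ ((x.2.2 + 1 : ℕ) - 1 - (t : ℕ))}.ncard := by
            apply Set.ncard_le_ncard _ (Set.toFinite _)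
            intro r hr
            exact hr.2
        _ ≤ (x.2.2 : ℕ) + 1 := kr_aux_card _ _ _ hne
        _ ≤ n := x.2.2.isLt
  have hsub : {r : ZMod p |
          ∃ i j m : ℕ, ∃ h1 : i + m ≤ n, ∃ h2 : j + m ≤ n,
            (fun t : Fin m => T ⟨i + t, by have := t.isLt; omega⟩) ≠
                (fun t : Fin m => T ⟨j + t, by have := t.isLt; omega⟩) ∧
              ∑ t : Fin m, T ⟨i + t, by have := t.isLt; omega⟩ * r ^ (m - 1 - (t : ℕ)) =
                ∑ t : Fin m, T ⟨j + t, by have := t.isLt; omega⟩ * r ^ (m - 1 - (t : ℕ))} ⊆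
      ↑(Finset.univ.biUnion F) := by
    intro r hr
    obtain ⟨i, j, m, h1, h2, hne, heq⟩ := hr
    have hT1 : ∀ t : Fin m, T ⟨i + t, by have := t.isLt; omega⟩ = T' (i + t) := by
      intro t
      have h : i + (t : ℕ) < n := by have := t.isLt; omega
      simp only [hT']
      rw [dif_pos h]
    have hT2 : ∀ t : Fin m, T ⟨j + t, by have := t.isLt; omega⟩ = T' (j + t) := by
      intro t
      have h : j + (t : ℕ) < n := by have := t.isLt; omega
      simp only [hT']
      rw [dif_pos h]
    have hm : 0 < m := by
      by_contra h
      push_neg at h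
      interval_cases m
      exact hne (funext fun t => t.elim0)
    have hrS : r ∈ S i j m := by
      constructor
      · intro h
        apply hne
        funext t
        rw [hT1 t, hT2 t, congrFun h t]
      · simp only [← hT1, ← hT2]
        exact heq
    rw [Finset.mem_coe, Finset.mem_biUnion]
    refine ⟨(⟨i, by omega⟩, ⟨j, by omega⟩, ⟨m - 1, by omega⟩), Finset.mem_univ _, ?_⟩
    rw [hF]
    simp only [Set.Finite.mem_toFinset]
    have hm1 : m - 1 + 1 = m := by omega
    simpa only [hm1] using hrS
  calc n ^ c * _ ≤ n ^ c * (Finset.univ.biUnion F).card := by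
        gcongr
        calc _ ≤ (↑(Finset.univ.biUnion F) : Set (ZMod p)).ncard :=
              Set.ncard_le_ncard hsub (Finset.univ.biUnion F).finite_toSet
          _ = (Finset.univ.biUnion F).card := Set.ncard_coe_finset _
    _ ≤ n ^ c * (Finset.univ.card * n) := by
        gcongr
        exact Finset.card_biUnion_le_card_mul _ _ _ fun x _ => hFcard x
    _ = n ^ (c + 4) := by
        simp [Finset.card_univ]
        ring
    _ ≤ p := hp
end

section
/- Let w ≥ 1, let α be a linear order, and let g : Fin (w+1) → α be injective. Let A be the unique index in {0, …, w−1} at which g attains its minimum over {0, …, w−1}, and let B be the unique index in {1, …, w} at which g attains its minimum over {1, …, w}. Then A ≠ B if and only if the global minimum of g over all of Fin (w+1) is attained at index 0 or at index w. -/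
/-! By injectivity, a window containing the global minimizer `m` of `g` has `m` as its
minimizer. If `0 < m < w`, both windows contain `m`, so `A = m = B`. If `m = 0`, then `A = 0`,
while `B ≥ 1`; symmetrically if `m = w`. -/

theorem Function.Injective.eq_of_forall_mem_le_of_forall_le {ι α : Type*} [LinearOrder α]
    {g : ι → α} (hg : Function.Injective g) {s : Set ι} {a m : ι}
    (ha : ∀ x ∈ s, g a ≤ g x) (hm : m ∈ s) (hmin : ∀ x, g m ≤ g x) : a = m :=
  hg ((ha m hm).antisymm (hmin a))

theorem consecutive_window_minimizers_differ_iff_general (w : ℕ)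
    {α : Type*} [LinearOrder α] (g : Fin (w + 1) → α) (hg : Function.Injective g)
    (A B : Fin (w + 1))
    (hA : (A : ℕ) < w ∧ ∀ x : Fin (w + 1), (x : ℕ) < w → g A ≤ g x)
    (hB : 1 ≤ (B : ℕ) ∧ ∀ x : Fin (w + 1), 1 ≤ (x : ℕ) → g B ≤ g x) :
    A ≠ B ↔ ((∀ x, g 0 ≤ g x) ∨ (∀ x, g (Fin.last w) ≤ g x)) := by
  obtain ⟨hAw, hAmin⟩ := hA
  obtain ⟨hB1, hBmin⟩ := hB
  have hA_eq {m : Fin (w + 1)} (hm : (m : ℕ) < w) (hmin : ∀ x, g m ≤ g x) : A = m :=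
    hg.eq_of_forall_mem_le_of_forall_le (s := {x | (x : ℕ) < w}) hAmin hm hmin
  have hB_eq {m : Fin (w + 1)} (hm : 1 ≤ (m : ℕ)) (hmin : ∀ x, g m ≤ g x) : B = m :=
    hg.eq_of_forall_mem_le_of_forall_le (s := {x | 1 ≤ (x : ℕ)}) hBmin hm hmin
  constructor
  · intro hne
    obtain ⟨m, hm⟩ := Finite.exists_min g
    have hm_end : m = 0 ∨ m = Fin.last w := by
      by_contra! hm_ne
      exact hne ((hA_eq (Fin.val_lt_last hm_ne.2) hm).trans
        (hB_eq (Fin.pos_of_ne_zero hm_ne.1) hm).symm)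
    rcases hm_end with rfl | rfl
    exacts [Or.inl hm, Or.inr hm]
  · rintro (h0 | hlast) rfl
    · rw [hA_eq (by simpa using (Nat.zero_le _).trans_lt hAw) h0] at hB1
      simp at hB1
    · rw [hB_eq (by simpa using hB1.trans hAw.le) hlast] at hAw
      simp at hAw

/-- **When do two consecutive windows pick different minimizers?**
Let `g : Fin (w+1) → α` be injective into a linear order, `A` the unique index minimizing `g`
over the window `{0, …, w-1}` and `B` the unique index minimizing `g` over the window
`{1, …, w}`. Then `A ≠ B` iff the global minimum of `g` is attained at index `0` or index `w`. -/
theorem consecutive_window_minimizers_differ_iff (w : ℕ) (hw : 1 ≤ w)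
    {α : Type*} [LinearOrder α] (g : Fin (w + 1) → α) (hg : Function.Injective g)
    (A B : Fin (w + 1))
    (hA : (A : ℕ) < w ∧ ∀ x : Fin (w + 1), (x : ℕ) < w → g A ≤ g x)
    (hB : 1 ≤ (B : ℕ) ∧ ∀ x : Fin (w + 1), 1 ≤ (x : ℕ) → g B ≤ g x) :
    A ≠ B ↔ ((∀ x, g 0 ≤ g x) ∨ (∀ x, g (Fin.last w) ≤ g x)) :=
  consecutive_window_minimizers_differ_iff_general w g hg A B hA hB
end

section
/- Let w ≥ 1. The number of bijections g : Fin (w+1) → Fin (w+1) such that the index at which g attains its minimum over {0, …, w−1} differs from the index at which g attains its minimum over {1, …, w} equals 2·w!. Consequently, for a uniformly random permutation g of Fin (w+1), the probability that the two consecutive windows {0, …, w−1} and {1, …, w} have different minimizing indices is exactly 2/(w+1). -/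
/-!
The global minimizer `g⁻¹ 0` of a permutation `g` is also the minimizer of every window that
contains it. Hence the windows `{0, …, w-1}` and `{1, …, w}` have different minimizers exactly
when `g⁻¹ 0` lies outside their overlap, i.e. `g⁻¹ 0 ∈ {0, w}`, and each of these two cases
accounts for `w!` permutations.
-/

open Equiv Finset Function
open scoped Nat

theorem Equiv.Perm.card_apply_eq {α : Type*} [Fintype α] [DecidableEq α] (a b : α) :
    #{g : Perm α | g a = b} = (Fintype.card α - 1)! := by
  have fix_a : {g : Perm α // g a = b} ≃ {g : Perm α // g a = a} :=
    (Equiv.mulLeft (swap a b)).subtypeEquiv fun g => by simp [Perm.mul_apply, swap_apply_eq_iff]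
  have fixing : {g : Perm α // g a = a} ≃ Perm {x // x ≠ a} :=
    ((Perm.subtypeEquivSubtypePerm (· ≠ a)).trans (subtypeEquivRight fun g => by simp)).symm
  rw [← Fintype.card_subtype, Fintype.card_congr (fix_a.trans fixing), Fintype.card_perm,
    Fintype.card_subtype_compl, Fintype.card_subtype_eq]

theorem Equiv.Perm.card_apply_eq_or_apply_eq {α : Type*} [Fintype α] [DecidableEq α]
    {a a' : α} (h : a ≠ a') (b : α) :
    #{g : Perm α | g a = b ∨ g a' = b} = 2 * (Fintype.card α - 1)! := by
  rw [filter_or, card_union_of_disjoint, Perm.card_apply_eq, Perm.card_apply_eq, two_mul]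
  exact disjoint_filter.2 fun g _ hb hb' => h (g.injective (hb.trans hb'.symm))

section Minimizers

variable {α β : Type*} [LinearOrder β] {g : α → β} {p q : α → Prop} {m : α}

theorem eq_of_forall_le_of_forall_le (hg : Injective g) (hm : ∀ x, g m ≤ g x) (hpm : p m)
    {A : α} (hA : ∀ x, p x → g A ≤ g x) : A = m :=
  hg ((hA m hpm).antisymm (hm A))

theorem exists_ne_minimizers_iff [Finite α] (hg : Injective g) (hm : ∀ x, g m ≤ g x)
    (hp : ∃ x, p x) (hq : ∃ x, q x) (hcover : p m ∨ q m) :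
    (∃ A B, (p A ∧ ∀ x, p x → g A ≤ g x) ∧ (q B ∧ ∀ x, q x → g B ≤ g x) ∧ A ≠ B) ↔
      ¬(p m ∧ q m) := by
  constructor
  · rintro ⟨A, B, ⟨-, hA⟩, ⟨-, hB⟩, hAB⟩ ⟨hpm, hqm⟩
    exact hAB ((eq_of_forall_le_of_forall_le hg hm hpm hA).trans
      (eq_of_forall_le_of_forall_le hg hm hqm hB).symm)
  · intro hboth
    rcases hcover with hpm | hqm
    · obtain ⟨B, hqB, hB⟩ := Set.exists_min_image {x | q x} g (Set.toFinite _) hq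
      exact ⟨m, B, ⟨hpm, fun x _ => hm x⟩, ⟨hqB, hB⟩, fun h => hboth ⟨hpm, h ▸ hqB⟩⟩
    · obtain ⟨A, hpA, hA⟩ := Set.exists_min_image {x | p x} g (Set.toFinite _) hp
      exact ⟨A, m, ⟨hpA, hA⟩, ⟨hqm, fun x _ => hm x⟩, fun h => hboth ⟨h ▸ hpA, hqm⟩⟩

end Minimizers

/-- **Density of random minimizers: the charged-window count.**
Among all bijections `g` of `Fin (w+1)` (with `w ≥ 1`), exactly `2·w!` are such that the unique
index minimizing `g` over the window `{0, …, w-1}` differs from the unique index minimizing `g`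
over the window `{1, …, w}`. Consequently, for a uniformly random permutation the probability
that the two consecutive windows have different minimizing indices is exactly `2/(w+1)`. -/
theorem random_minimizer_charged_count (w : ℕ) (hw : 1 ≤ w) :
    (Finset.univ.filter (fun g : Equiv.Perm (Fin (w + 1)) =>
          ∃ A B : Fin (w + 1),
            ((A : ℕ) < w ∧ ∀ x : Fin (w + 1), (x : ℕ) < w → g A ≤ g x) ∧
              (1 ≤ (B : ℕ) ∧ ∀ x : Fin (w + 1), 1 ≤ (x : ℕ) → g B ≤ g x) ∧ A ≠ B)).card
        = 2 * Nat.factorial w ∧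
      ((Finset.univ.filter (fun g : Equiv.Perm (Fin (w + 1)) =>
          ∃ A B : Fin (w + 1),
            ((A : ℕ) < w ∧ ∀ x : Fin (w + 1), (x : ℕ) < w → g A ≤ g x) ∧
              (1 ≤ (B : ℕ) ∧ ∀ x : Fin (w + 1), 1 ≤ (x : ℕ) → g B ≤ g x) ∧ A ≠ B)).card : ℚ)
          / Nat.factorial (w + 1) = 2 / (w + 1) := by
  have charged_iff (g : Perm (Fin (w + 1))) :
      (∃ A B : Fin (w + 1),
          ((A : ℕ) < w ∧ ∀ x : Fin (w + 1), (x : ℕ) < w → g A ≤ g x) ∧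
            (1 ≤ (B : ℕ) ∧ ∀ x : Fin (w + 1), 1 ≤ (x : ℕ) → g B ≤ g x) ∧ A ≠ B) ↔
        g 0 = 0 ∨ g (Fin.last w) = 0 := by
    have hm : ∀ x, g (g.symm 0) ≤ g x := by simp
    rw [exists_ne_minimizers_iff g.injective hm ⟨0, hw⟩ ⟨Fin.last w, hw⟩ (by omega),
      ← g.eq_symm_apply, ← g.eq_symm_apply, Fin.ext_iff, Fin.ext_iff, Fin.val_zero, Fin.val_last]
    omega
  rw [filter_congr fun g _ => charged_iff g]
  have hcard : #{g : Perm (Fin (w + 1)) | g 0 = 0 ∨ g (Fin.last w) = 0} = 2 * w ! := by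
    rw [Perm.card_apply_eq_or_apply_eq (Fin.ne_of_lt hw), Fintype.card_fin, Nat.add_sub_cancel]
  refine ⟨hcard, ?_⟩
  rw [hcard, Nat.factorial_succ]
  push_cast
  field_simp
end

section
/- Fix σ, k, w ≥ 1 and set ℓ = w + k − 1, and fix an order function h : (Fin k → Fin σ) → ℕ. Let T, P : ℕ → Fin σ, let i, m be naturals with m ≥ ℓ, and suppose T(i+t) = P(t) for all t < m. Define the minimizer-position set of P on length m as M(P) = { minpos_P(j) : 0 ≤ j ≤ m − ℓ }, and the minimizer-position set of T on length n (with i + m ≤ n) as M(T) = { minpos_T(j') : 0 ≤ j' ≤ n − ℓ }. Then { i + q : q ∈ M(P) } ⊆ M(T); that is, every minimizer position of the pattern, shifted by the occurrence position i, is a minimizer position of the text. -/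
/-- The `k`-mer of the string `X : ℕ → Fin σ` starting at position `q`. -/
def kmer (σ k : ℕ) (X : ℕ → Fin σ) (q : ℕ) : Fin k → Fin σ := fun t => X (q + t)

/-- The minimizer position of the window of `X` starting at `j`: the least `q ∈ [j, j+w)`
such that `h (kmer of X at q) ≤ h (kmer of X at q')` for all `q' ∈ [j, j+w)`
(the leftmost `k`-mer of minimal `h`-value in the window). -/
noncomputable def minpos (σ k w : ℕ) (h : (Fin k → Fin σ) → ℕ) (X : ℕ → Fin σ) (j : ℕ) : ℕ :=
  sInf {q | j ≤ q ∧ q < j + w ∧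
    ∀ q', j ≤ q' → q' < j + w → h (kmer σ k X q) ≤ h (kmer σ k X q')}

/-- **Pattern minimizers occur among text minimizers.**
If `P` occurs in `T` at position `i` (with `ℓ = w+k-1 ≤ m` and `i + m ≤ n`), then every
minimizer position of `P` (on length `m`), shifted by `i`, is a minimizer position of `T`
(on length `n`): `{ i + q : q ∈ M(P) } ⊆ M(T)`. -/
theorem pattern_minimizers_subset_text_minimizers (σ k w : ℕ)
    (hσ : 1 ≤ σ) (hk : 1 ≤ k) (hw : 1 ≤ w) (h : (Fin k → Fin σ) → ℕ)
    (T P : ℕ → Fin σ) (i m n : ℕ) (hm : w + k - 1 ≤ m) (hn : i + m ≤ n)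
    (hocc : ∀ t < m, T (i + t) = P t) :
    (fun q => i + q) '' {q | ∃ j ≤ m - (w + k - 1), minpos σ k w h P j = q} ⊆
      {q | ∃ j' ≤ n - (w + k - 1), minpos σ k w h T j' = q} := by
  rintro x ⟨q, ⟨j, hj, rfl⟩, rfl⟩
  refine ⟨i + j, by omega, ?_⟩
  -- kmers agree on the window
  have hkmer : ∀ q, j ≤ q → q < j + w → kmer σ k T (i + q) = kmer σ k P q := by
    intro q hq1 hq2
    funext t
    have ht : (t : ℕ) < k := t.isLt
    have hlt : q + (t : ℕ) < m := by omega
    show T (i + q + t) = P (q + t)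
    rw [Nat.add_assoc]
    exact hocc _ hlt
  set S : Set ℕ := {q | j ≤ q ∧ q < j + w ∧
    ∀ q', j ≤ q' → q' < j + w → h (kmer σ k P q) ≤ h (kmer σ k P q')} with hS
  -- the two minimizer sets correspond under shifting by i
  have hset : {q | i + j ≤ q ∧ q < i + j + w ∧
      ∀ q', i + j ≤ q' → q' < i + j + w →
        h (kmer σ k T q) ≤ h (kmer σ k T q')} = (fun q => i + q) '' S := by
    ext r
    constructor
    · rintro ⟨h1, h2, h3⟩
      refine ⟨r - i, ⟨by omega, by omega, ?_⟩, show i + (r - i) = r by omega⟩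
      intro q' hq'1 hq'2
      have e1 : kmer σ k P (r - i) = kmer σ k T r := by
        rw [← hkmer (r - i) (by omega) (by omega), show i + (r - i) = r by omega]
      rw [e1, ← hkmer q' hq'1 hq'2]
      exact h3 (i + q') (by omega) (by omega)
    · rintro ⟨q, ⟨h1, h2, h3⟩, rfl⟩
      refine ⟨show i + j ≤ i + q by omega, show i + q < i + j + w by omega, ?_⟩
      intro q' hq'1 hq'2
      have hq'1' : i + j ≤ q' := hq'1
      have hq'2' : q' < i + j + w := hq'2
      rw [show (fun q => i + q) q = i + q from rfl, hkmer q h1 h2,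
        show q' = i + (q' - i) by omega, hkmer (q' - i) (by omega) (by omega)]
      exact h3 (q' - i) (by omega) (by omega)
  have hne : S.Nonempty := by
    obtain ⟨q, hqmem, hqmin⟩ := Finset.exists_min_image (Finset.Ico j (j + w))
      (fun q => h (kmer σ k P q)) ⟨j, by simp; omega⟩
    rw [Finset.mem_Ico] at hqmem
    exact ⟨q, hqmem.1, hqmem.2, fun q' h1 h2 =>
      hqmin q' (Finset.mem_Ico.mpr ⟨h1, h2⟩)⟩
  -- compute the sInf of the shifted set
  rw [minpos, minpos, hset]
  apply le_antisymm
  · exact Nat.sInf_le ⟨sInf S, Nat.sInf_mem hne, rfl⟩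
  · obtain ⟨q0, hq0, hq0'⟩ := Nat.sInf_mem (hne.image (fun q => i + q))
    rw [← hq0']
    exact Nat.add_le_add_left (Nat.sInf_le hq0) i
end

section
/- Fix σ, k, w ≥ 1 and set ℓ = w + k − 1, and fix an order function h : (Fin k → Fin σ) → ℕ. Let T, P : ℕ → Fin σ be strings of lengths n and m respectively with m ≥ ℓ and m ≤ n. If there exists a minimizer position q of P (i.e., q = minpos_P(j) for some 0 ≤ j ≤ m − ℓ) such that the k-mer of P at q does not equal the k-mer of T at any minimizer position of T (i.e., at any element of { minpos_T(j') : 0 ≤ j' ≤ n − ℓ }), then P does not occur in T: there is no i with i + m ≤ n and T(i+t) = P(t) for all t < m. -/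
lemma minset_nonempty (σ k w : ℕ) (hw : 1 ≤ w) (h : (Fin k → Fin σ) → ℕ)
    (X : ℕ → Fin σ) (j : ℕ) :
    {q | j ≤ q ∧ q < j + w ∧
      ∀ q', j ≤ q' → q' < j + w → h (kmer σ k X q) ≤ h (kmer σ k X q')}.Nonempty := by
  have hne : (Finset.Ico j (j + w)).Nonempty := by
    refine ⟨j, ?_⟩; simp [Finset.mem_Ico]; omega
  obtain ⟨a, ha, hmin⟩ := Finset.exists_min_image (Finset.Ico j (j + w))
    (fun q => h (kmer σ k X q)) hne
  simp only [Finset.mem_Ico] at ha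
  exact ⟨a, ha.1, ha.2, fun q' h1 h2 => hmin q' (Finset.mem_Ico.mpr ⟨h1, h2⟩)⟩

/-- **Early rejection is sound.**
Let `T, P` be strings of lengths `n` and `m` with `ℓ = w+k-1 ≤ m ≤ n`. If some minimizer
position `q = minpos_P(j)` of `P` carries a `k`-mer that differs from the `k`-mer of `T` at
every minimizer position of `T`, then `P` does not occur in `T`. -/
theorem pattern_minimizer_miss_implies_no_occurrence (σ k w : ℕ)
    (hσ : 1 ≤ σ) (hk : 1 ≤ k) (hw : 1 ≤ w) (h : (Fin k → Fin σ) → ℕ)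
    (T P : ℕ → Fin σ) (n m : ℕ) (hm : w + k - 1 ≤ m) (hmn : m ≤ n)
    (hmiss : ∃ j ≤ m - (w + k - 1),
      ∀ j' ≤ n - (w + k - 1),
        kmer σ k P (minpos σ k w h P j) ≠ kmer σ k T (minpos σ k w h T j')) :
    ¬ ∃ i : ℕ, i + m ≤ n ∧ ∀ t < m, T (i + t) = P t := by
  rintro ⟨i, hi, hocc⟩
  obtain ⟨j, hj, hne⟩ := hmiss
  have hjl : j + (w + k - 1) ≤ m := by omega
  -- k-mers in the window agree after shifting by i
  have hkmer : ∀ q, j ≤ q → q < j + w → kmer σ k T (i + q) = kmer σ k P q := by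
    intro q h1 h2
    funext t
    have ht : q + (t : ℕ) < m := by have := t.isLt; omega
    show T (i + q + (t : ℕ)) = P (q + t)
    rw [add_assoc]
    exact hocc (q + t) ht
  -- the defining sets correspond under the shift by i
  set SP := {q | j ≤ q ∧ q < j + w ∧
      ∀ q', j ≤ q' → q' < j + w → h (kmer σ k P q) ≤ h (kmer σ k P q')} with hSP
  set ST := {q | i + j ≤ q ∧ q < i + j + w ∧
      ∀ q', i + j ≤ q' → q' < i + j + w → h (kmer σ k T q) ≤ h (kmer σ k T q')} with hST
  have hmem : ∀ q, q ∈ SP ↔ i + q ∈ ST := by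
    intro q
    constructor
    · rintro ⟨h1, h2, h3⟩
      refine ⟨by omega, by omega, fun q' hq1 hq2 => ?_⟩
      have hq : q' = i + (q' - i) := by omega
      rw [hkmer q h1 h2, hq, hkmer (q' - i) (by omega) (by omega)]
      exact h3 _ (by omega) (by omega)
    · rintro ⟨h1, h2, h3⟩
      refine ⟨by omega, by omega, fun q' hq1 hq2 => ?_⟩
      rw [← hkmer q (by omega) (by omega), ← hkmer q' hq1 hq2]
      exact h3 (i + q') (by omega) (by omega)
  have hPne : SP.Nonempty := minset_nonempty σ k w hw h P j
  have hTne : ST.Nonempty := minset_nonempty σ k w hw h T (i + j)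
  have haP : sInf SP ∈ SP := Nat.sInf_mem hPne
  have haT : sInf ST ∈ ST := Nat.sInf_mem hTne
  -- sInf ST = i + sInf SP
  have hle1 : sInf ST ≤ i + sInf SP := Nat.sInf_le ((hmem _).mp haP)
  have hge : i + sInf SP ≤ sInf ST := by
    have h1 : i + j ≤ sInf ST := haT.1
    have : sInf ST - i ∈ SP := (hmem _).mpr (by
      have : i + (sInf ST - i) = sInf ST := by omega
      rw [this]; exact haT)
    have := Nat.sInf_le this
    omega
  have hEq : sInf ST = i + sInf SP := le_antisymm hle1 hge
  have hmpP : minpos σ k w h P j = sInf SP := rfl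
  have hmpT : minpos σ k w h T (i + j) = sInf ST := rfl
  have hij : i + j ≤ n - (w + k - 1) := by omega
  apply hne (i + j) hij
  rw [hmpP, hmpT, hEq, hkmer (sInf SP) haP.1 haP.2.1]
end
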